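/- arXiv:1306.2047 — 3 statements merged into one kernel-verified Lean document; each statement's English description precedes it below -/
import Mathlib

section
/- Let Λ be a nontrivial commutative ring and M a Λ-module. Suppose M admits two finite free resolutions, i.e. there are exact sequences 0 → Λ^{n_d} → Λ^{n_{d-1}} → ⋯ → Λ^{n_0} → M → 0 and 0 → Λ^{m_e} → Λ^{m_{e-1}} → ⋯ → Λ^{m_0} → M → 0 of Λ-modules with all Λ^{n_i}, Λ^{m_j} finite free. Then the two Euler characteristics agree: Σ_{i=0}^{d} (−1)^i n_i = Σ_{j=0}^{e} (−1)^j m_j (as integers). -/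
/-- A finite free resolution `0 → Λ^{n d} → ⋯ → Λ^{n 0} → M → 0` of length `d`:
the ranks are given by `n : ℕ → ℕ` which vanishes above `d`, the maps
`f i : Λ^{n (i+1)} → Λ^{n i}` together with the augmentation `g : Λ^{n 0} → M`
form an exact sequence (exactness at every `Λ^{n i}` and surjectivity onto `M`;
since `n i = 0` for `i > d`, exactness at `Λ^{n d}` says the last map is injective). -/
structure FiniteFreeResolution (Λ : Type*) [CommRing Λ]
    (M : Type*) [AddCommGroup M] [Module Λ M] (d : ℕ) (n : ℕ → ℕ) : Type _ where
  bounded : ∀ i, d < i → n i = 0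
  f : ∀ i : ℕ, (Fin (n (i + 1)) → Λ) →ₗ[Λ] (Fin (n i) → Λ)
  g : (Fin (n 0) → Λ) →ₗ[Λ] M
  surj : Function.Surjective g
  exact_zero : LinearMap.range (f 0) = LinearMap.ker g
  exact : ∀ i : ℕ, LinearMap.range (f (i + 1)) = LinearMap.ker (f i)

/-! Schanuel's lemma: if `K × F ≃ L × G` with `F`, `G` finite free and `Λ^a ↠ K`, `Λ^b ↠ L`
have kernels `K₁`, `L₁`, then `K₁ × (Λ^b × G) ≃ L₁ × (Λ^a × F)`. So passing to the kernels of the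
augmentations keeps two resolutions resolving stably isomorphic modules, and by induction on the
common length (a resolution can be padded with zeros) `χ(n) + rk F = χ(m) + rk G`. At length zero
this is invariance of rank, which holds over any nontrivial commutative ring. -/

open LinearMap Function

section Schanuel

variable {Λ : Type*} [CommRing Λ]
variable {K L M P Q N F G : Type*} [AddCommGroup K] [Module Λ K] [AddCommGroup L] [Module Λ L]
  [AddCommGroup M] [Module Λ M] [AddCommGroup P] [Module Λ P] [AddCommGroup Q] [Module Λ Q]
  [AddCommGroup N] [Module Λ N] [AddCommGroup F] [Module Λ F] [AddCommGroup G] [Module Λ G]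

theorem Function.Exact.nonempty_linearEquiv_prod_of_projective [Module.Projective Λ P]
    {f : K →ₗ[Λ] M} {g : M →ₗ[Λ] P} (h : Exact f g) (hf : Injective f) (hg : Surjective g) :
    Nonempty (M ≃ₗ[Λ] K × P) :=
  let ⟨s, hs⟩ := Module.projective_lifting_property g LinearMap.id hg
  ⟨(h.splitSurjectiveEquiv hf ⟨s, hs⟩).1⟩

def LinearMap.pullback (p : P →ₗ[Λ] N) (q : Q →ₗ[Λ] N) : Submodule Λ (P × Q) :=
  eqLocus (p ∘ₗ fst Λ P Q) (q ∘ₗ snd Λ P Q)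

theorem LinearMap.mem_pullback {p : P →ₗ[Λ] N} {q : Q →ₗ[Λ] N} {z : P × Q} :
    z ∈ p.pullback q ↔ p z.1 = q z.2 :=
  Iff.rfl

def LinearMap.pullbackComm (p : P →ₗ[Λ] N) (q : Q →ₗ[Λ] N) :
    p.pullback q ≃ₗ[Λ] q.pullback p :=
  (LinearEquiv.prodComm Λ P Q).ofSubmodules _ _ <| by
    ext ⟨y, x⟩
    simp [Submodule.map_equiv_eq_comap_symm, mem_pullback, eq_comm]

theorem LinearMap.nonempty_pullback_equiv_prod [Module.Projective Λ P] (p : P →ₗ[Λ] N)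
    {j : L →ₗ[Λ] Q} {q : Q →ₗ[Λ] N} (hj : Injective j) (hq : Surjective q) (hjq : Exact j q) :
    Nonempty (p.pullback q ≃ₗ[Λ] L × P) := by
  let ι : L →ₗ[Λ] p.pullback q := codRestrict _ (inr Λ P Q ∘ₗ j) fun y => by
    simp [mem_pullback, hjq.apply_apply_eq_zero]
  let π : p.pullback q →ₗ[Λ] P := fst Λ P Q ∘ₗ (p.pullback q).subtype
  refine Exact.nonempty_linearEquiv_prod_of_projective (f := ι) (g := π) ?_ ?_ ?_
  · rintro ⟨⟨x, y⟩, hxy⟩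
    change x = 0 ↔ _
    constructor
    · rintro rfl
      obtain ⟨l, rfl⟩ := (hjq y).mp (by simpa [mem_pullback] using hxy.symm)
      exact ⟨l, rfl⟩
    · rintro ⟨l, hl⟩
      exact congrArg (fun z : p.pullback q => (z : P × Q).1) hl.symm
  · intro y y' h
    exact hj (congrArg (fun z : p.pullback q => (z : P × Q).2) h)
  · intro x
    obtain ⟨y, hy⟩ := hq (p x)
    exact ⟨⟨(x, y), hy.symm⟩, rfl⟩

theorem Module.Projective.schanuel [Module.Projective Λ P]
    [Module.Projective Λ Q] {i : K →ₗ[Λ] P} {p : P →ₗ[Λ] N} {j : L →ₗ[Λ] Q} {q : Q →ₗ[Λ] N}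
    (hi : Function.Injective i) (hp : Function.Surjective p) (hip : Exact i p)
    (hj : Function.Injective j) (hq : Function.Surjective q) (hjq : Exact j q) :
    Nonempty ((K × Q) ≃ₗ[Λ] L × P) := by
  obtain ⟨eP⟩ := p.nonempty_pullback_equiv_prod hj hq hjq
  obtain ⟨eQ⟩ := q.nonempty_pullback_equiv_prod hi hp hip
  exact ⟨eQ.symm ≪≫ₗ q.pullbackComm p ≪≫ₗ eP⟩

theorem LinearMap.exact_inl_comp_subtype_ker_prodMap_id (g : P →ₗ[Λ] M) :
    Exact (inl Λ P F ∘ₗ (ker g).subtype) (g.prodMap (LinearMap.id : F →ₗ[Λ] F)) := by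
  rintro ⟨x, y⟩
  simp [Prod.ext_iff, eq_comm]

theorem Module.Projective.schanuel_of_prod_equiv [Module.Projective Λ (P × F)]
    [Module.Projective Λ (Q × G)] {g : P →ₗ[Λ] K} {g' : Q →ₗ[Λ] L}
    (hg : Function.Surjective g) (hg' : Function.Surjective g') (e : (K × F) ≃ₗ[Λ] L × G) :
    Nonempty ((ker g × Q × G) ≃ₗ[Λ] ker g' × P × F) :=
  schanuel (inl_injective.comp (ker g).injective_subtype)
    (e.surjective.comp (hg.prodMap surjective_id))
    (e.postcomp_exact_iff_exact.mpr (exact_inl_comp_subtype_ker_prodMap_id g))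
    (inl_injective.comp (ker g').injective_subtype) (hg'.prodMap surjective_id)
    (exact_inl_comp_subtype_ker_prodMap_id g')

end Schanuel

namespace FiniteFreeResolution

variable {Λ : Type*} [CommRing Λ] {M M' : Type*} [AddCommGroup M] [Module Λ M]
  [AddCommGroup M'] [Module Λ M'] {d : ℕ} {n : ℕ → ℕ}

def congr (res : FiniteFreeResolution Λ M d n) (e : M ≃ₗ[Λ] M') :
    FiniteFreeResolution Λ M' d n where
  __ := res
  g := e.toLinearMap ∘ₗ res.g
  surj := e.surjective.comp res.surj
  exact_zero := by rw [ker_comp, LinearEquiv.ker, Submodule.comap_bot, res.exact_zero]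

def mono (res : FiniteFreeResolution Λ M d n) {d' : ℕ} (h : d ≤ d') :
    FiniteFreeResolution Λ M d' n where
  __ := res
  bounded i hi := res.bounded i (h.trans_lt hi)

def tail (res : FiniteFreeResolution Λ M (d + 1) n) :
    FiniteFreeResolution Λ (ker res.g) d (fun i => n (i + 1)) where
  bounded i hi := res.bounded (i + 1) (by omega)
  f i := res.f (i + 1)
  g := (res.f 0).codRestrict (ker res.g) fun x => res.exact_zero ▸ mem_range_self _ x
  surj := by
    rintro ⟨y, hy⟩
    obtain ⟨x, rfl⟩ := res.exact_zero ▸ hy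
    exact ⟨x, rfl⟩
  exact_zero := by rw [ker_codRestrict, res.exact 0]
  exact i := res.exact (i + 1)

theorem bijective_g (res : FiniteFreeResolution Λ M 0 n) : Function.Bijective res.g := by
  have : Subsingleton (Fin (n 1) → Λ) := by rw [res.bounded 1 one_pos]; infer_instance
  refine ⟨?_, res.surj⟩
  rw [← ker_eq_bot, ← res.exact_zero, range_eq_bot]
  exact Subsingleton.elim _ _

end FiniteFreeResolution

def eulerChar (d : ℕ) (n : ℕ → ℕ) : ℤ :=
  ∑ i ∈ Finset.range (d + 1), (-1) ^ i * (n i : ℤ)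

theorem eulerChar_zero (n : ℕ → ℕ) : eulerChar 0 n = n 0 := by
  simp [eulerChar]

theorem eulerChar_succ (d : ℕ) (n : ℕ → ℕ) :
    eulerChar (d + 1) n = n 0 - eulerChar d (fun i => n (i + 1)) := by
  rw [eulerChar, eulerChar, Finset.sum_range_succ', sub_eq_add_neg, ← Finset.sum_neg_distrib,
    add_comm]
  simp [pow_succ]

theorem eulerChar_eq_of_le {d d' : ℕ} {n : ℕ → ℕ} (h : d ≤ d') (hn : ∀ i, d < i → n i = 0) :
    eulerChar d' n = eulerChar d n := by
  refine (Finset.sum_subset (Finset.range_subset_range.mpr (by omega)) fun i _ hi => ?_).symm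
  simp [hn i (by simpa using hi)]

universe u

theorem FiniteFreeResolution.eulerChar_add_finrank_eq {Λ : Type u} [CommRing Λ] [Nontrivial Λ]
    {K L F G : Type u} [AddCommGroup K] [Module Λ K] [AddCommGroup L] [Module Λ L]
    [AddCommGroup F] [Module Λ F] [Module.Free Λ F] [Module.Finite Λ F]
    [AddCommGroup G] [Module Λ G] [Module.Free Λ G] [Module.Finite Λ G]
    {d : ℕ} {n m : ℕ → ℕ} (res₁ : FiniteFreeResolution Λ K d n)
    (res₂ : FiniteFreeResolution Λ L d m) (e : (K × F) ≃ₗ[Λ] L × G) :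
    eulerChar d n + Module.finrank Λ F = eulerChar d m + Module.finrank Λ G := by
  induction d generalizing n m K L F G with
  | zero =>
    have e₀ : ((Fin (n 0) → Λ) × F) ≃ₗ[Λ] (Fin (m 0) → Λ) × G :=
      (LinearEquiv.ofBijective _ res₁.bijective_g).prodCongr (.refl Λ F) ≪≫ₗ e ≪≫ₗ
        ((LinearEquiv.ofBijective _ res₂.bijective_g).prodCongr (.refl Λ G)).symm
    have hrank := e₀.finrank_eq
    rw [Module.finrank_prod, Module.finrank_prod, Module.finrank_fin_fun, Module.finrank_fin_fun]
      at hrank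
    rw [eulerChar_zero, eulerChar_zero]
    exact_mod_cast hrank
  | succ d ih =>
    obtain ⟨e'⟩ := Module.Projective.schanuel_of_prod_equiv res₁.surj res₂.surj e
    have hkernels := ih res₁.tail res₂.tail e'
    rw [Module.finrank_prod, Module.finrank_prod, Module.finrank_fin_fun, Module.finrank_fin_fun]
      at hkernels
    rw [eulerChar_succ, eulerChar_succ]
    push_cast at hkernels
    linarith

/-- If a module `M` over a nontrivial commutative ring `Λ` admits two finite free
resolutions, then the alternating sums of the ranks of the two resolutions agree. -/
theorem euler_characteristic_independent_of_resolution
    (Λ : Type*) [CommRing Λ] [Nontrivial Λ]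
    (M : Type*) [AddCommGroup M] [Module Λ M]
    (d e : ℕ) (n m : ℕ → ℕ)
    (res₁ : FiniteFreeResolution Λ M d n)
    (res₂ : FiniteFreeResolution Λ M e m) :
    ∑ i ∈ Finset.range (d + 1), (-1 : ℤ) ^ i * (n i : ℤ) =
      ∑ j ∈ Finset.range (e + 1), (-1 : ℤ) ^ j * (m j : ℤ) := by
  -- `M` is replaced by a module in the universe of `Λ`, where the induction takes place.
  let e₀ : ((Fin (n 0) → Λ) ⧸ ker res₁.g) ≃ₗ[Λ] M := res₁.g.quotKerEquivOfSurjective res₁.surj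
  have key := FiniteFreeResolution.eulerChar_add_finrank_eq
    ((res₁.congr e₀.symm).mono (le_max_left d e)) ((res₂.congr e₀.symm).mono (le_max_right d e))
    (.refl Λ (_ × Λ))
  rwa [add_left_inj, eulerChar_eq_of_le (le_max_left d e) res₁.bounded,
    eulerChar_eq_of_le (le_max_right d e) res₂.bounded] at key
end

section
/- Let Λ be a commutative Noetherian domain and x ∈ Λ a nonzero nonunit such that the quotient ring Ω = Λ/xΛ is again a domain. Let M be a finitely generated Λ-module admitting a finite free resolution 0 → Λ^{n_d} → ⋯ → Λ^{n_0} → M → 0. Then M/xM and M[x] are finitely generated Ω-modules and rank_Ω(M/xM) = rank_Ω(M[x]) + rank_Λ(M), where M[x] = { m ∈ M | x · m = 0 }. -/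
open TensorProduct Pointwise

section Helpers

variable {R : Type*} [CommRing R] [IsDomain R]

private lemma mem_smul_top_iff {M : Type*} [AddCommGroup M] [Module R M] (a : R) (m : M) :
    m ∈ a • (⊤ : Submodule R M) ↔ ∃ y, a • y = m := by
  rw [← SetLike.mem_coe, Submodule.coe_pointwise_smul]
  constructor
  · rintro ⟨y, -, rfl⟩; exact ⟨y, rfl⟩
  · rintro ⟨y, rfl⟩; exact ⟨y, trivial, rfl⟩

private lemma tensor_finrank_eq_of_equiv {A B : Type*} [AddCommGroup A] [Module R A]
    [AddCommGroup B] [Module R B] (e : A ≃ₗ[R] B) :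
    Module.finrank (FractionRing R) (FractionRing R ⊗[R] A) =
      Module.finrank (FractionRing R) (FractionRing R ⊗[R] B) :=
  (LinearEquiv.baseChange R (FractionRing R) _ _ e).finrank_eq

private lemma tensor_finrank_free (k : ℕ) :
    Module.finrank (FractionRing R) (FractionRing R ⊗[R] (Fin k → R)) = k := by
  rw [Module.finrank_eq_card_basis ((Pi.basisFun R (Fin k)).baseChange (FractionRing R)),
    Fintype.card_fin]

private lemma tensor_finrank_subsingleton {A : Type*} [AddCommGroup A] [Module R A]
    [Subsingleton A] :
    Module.finrank (FractionRing R) (FractionRing R ⊗[R] A) = 0 :=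
  Module.finrank_zero_of_subsingleton

private lemma rank_add_of_exact {A B C : Type*} [AddCommGroup A] [Module R A]
    [AddCommGroup B] [Module R B] [AddCommGroup C] [Module R C] [Module.Finite R B]
    (u : A →ₗ[R] B) (v : B →ₗ[R] C) (hu : Function.Injective u) (hv : Function.Surjective v)
    (huv : Function.Exact u v) :
    Module.finrank (FractionRing R) (FractionRing R ⊗[R] B) =
      Module.finrank (FractionRing R) (FractionRing R ⊗[R] A) +
      Module.finrank (FractionRing R) (FractionRing R ⊗[R] C) := by
  have hu' : Function.Injective ⇑(u.baseChange (FractionRing R)) := by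
    rw [LinearMap.baseChange_eq_ltensor]
    exact Module.Flat.lTensor_preserves_injective_linearMap u hu
  have hv' : Function.Surjective ⇑(v.baseChange (FractionRing R)) := by
    rw [LinearMap.baseChange_eq_ltensor]
    exact LinearMap.lTensor_surjective (FractionRing R) hv
  have hex : Function.Exact ⇑(u.baseChange (FractionRing R)) ⇑(v.baseChange (FractionRing R)) := by
    rw [LinearMap.baseChange_eq_ltensor, LinearMap.baseChange_eq_ltensor]
    exact Module.Flat.lTensor_exact (FractionRing R) huv
  have hker : LinearMap.ker (v.baseChange (FractionRing R)) = LinearMap.range (u.baseChange (FractionRing R)) :=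
    LinearMap.exact_iff.mp hex
  have h1 := LinearMap.finrank_range_add_finrank_ker (v.baseChange (FractionRing R))
  have h2 : Module.finrank (FractionRing R) ↥(LinearMap.range (v.baseChange (FractionRing R))) =
      Module.finrank (FractionRing R) ((FractionRing R) ⊗[R] C) := by
    rw [LinearMap.range_eq_top.mpr hv']; exact finrank_top (FractionRing R) _
  have h3 : Module.finrank (FractionRing R) ↥(LinearMap.ker (v.baseChange (FractionRing R))) =
      Module.finrank (FractionRing R) ((FractionRing R) ⊗[R] A) := by
    rw [hker]; exact LinearMap.finrank_range_of_inj hu'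
  omega

private lemma rank_four_of_exact {A B C D : Type*} [AddCommGroup A] [Module R A]
    [AddCommGroup B] [Module R B] [AddCommGroup C] [Module R C] [AddCommGroup D] [Module R D]
    [Module.Finite R B] [Module.Finite R C]
    (u : A →ₗ[R] B) (v : B →ₗ[R] C) (w : C →ₗ[R] D)
    (hu : Function.Injective u) (hw : Function.Surjective w)
    (h1 : Function.Exact u v) (h2 : Function.Exact v w) :
    Module.finrank (FractionRing R) (FractionRing R ⊗[R] A) +
      Module.finrank (FractionRing R) (FractionRing R ⊗[R] C) =
    Module.finrank (FractionRing R) (FractionRing R ⊗[R] B) +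
      Module.finrank (FractionRing R) (FractionRing R ⊗[R] D) := by
  have hu' : Function.Injective ⇑(u.baseChange (FractionRing R)) := by
    rw [LinearMap.baseChange_eq_ltensor]
    exact Module.Flat.lTensor_preserves_injective_linearMap u hu
  have hw' : Function.Surjective ⇑(w.baseChange (FractionRing R)) := by
    rw [LinearMap.baseChange_eq_ltensor]
    exact LinearMap.lTensor_surjective (FractionRing R) hw
  have hex1 : Function.Exact ⇑(u.baseChange (FractionRing R)) ⇑(v.baseChange (FractionRing R)) := by
    rw [LinearMap.baseChange_eq_ltensor, LinearMap.baseChange_eq_ltensor]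
    exact Module.Flat.lTensor_exact (FractionRing R) h1
  have hex2 : Function.Exact ⇑(v.baseChange (FractionRing R)) ⇑(w.baseChange (FractionRing R)) := by
    rw [LinearMap.baseChange_eq_ltensor, LinearMap.baseChange_eq_ltensor]
    exact Module.Flat.lTensor_exact (FractionRing R) h2
  have hB := LinearMap.finrank_range_add_finrank_ker (v.baseChange (FractionRing R))
  have hC := LinearMap.finrank_range_add_finrank_ker (w.baseChange (FractionRing R))
  have e1 : Module.finrank (FractionRing R) ↥(LinearMap.ker (v.baseChange (FractionRing R))) =
      Module.finrank (FractionRing R) ((FractionRing R) ⊗[R] A) := by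
    rw [LinearMap.exact_iff.mp hex1]; exact LinearMap.finrank_range_of_inj hu'
  have e2 : Module.finrank (FractionRing R) ↥(LinearMap.range (w.baseChange (FractionRing R))) =
      Module.finrank (FractionRing R) ((FractionRing R) ⊗[R] D) := by
    rw [LinearMap.range_eq_top.mpr hw']; exact finrank_top (FractionRing R) _
  have e3 : LinearMap.ker (w.baseChange (FractionRing R)) = LinearMap.range (v.baseChange (FractionRing R)) :=
    LinearMap.exact_iff.mp hex2
  rw [e3] at hC
  omega

end Helpers

universe uu

section Main

set_option maxHeartbeats 1000000
set_option synthInstance.maxHeartbeats 200000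

variable (Λ : Type uu) [CommRing Λ] [IsDomain Λ] [IsNoetherianRing Λ] (x : Λ)

/-- The quotient ring. -/
private abbrev Om : Type _ := Λ ⧸ Ideal.span ({x} : Set Λ)


private lemma smul_pi_eq_zero (hx0 : x ≠ 0) {k : ℕ} (y : Fin k → Λ) (h : x • y = 0) : y = 0 := by
  funext i
  have h1 : x * y i = 0 := congrFun h i
  rcases mul_eq_zero.mp h1 with h2 | h2
  · exact absurd h2 hx0
  · exact h2

/-- The pi-type quotient equivalence `(Fin k → Λ) ⧸ x•⊤ ≃ (Fin k → (Om Λ x))`. -/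
private noncomputable def quotPiEquiv (k : ℕ) :
    ((Fin k → Λ) ⧸ x • (⊤ : Submodule Λ (Fin k → Λ))) ≃ₗ[(Om Λ x)] (Fin k → (Om Λ x)) := by
  have hq : Function.Surjective (algebraMap Λ (Om Λ x)) := Ideal.Quotient.mk_surjective
  refine LinearEquiv.extendScalarsOfSurjective hq ?_
  set φ : (Fin k → Λ) →ₗ[Λ] (Fin k → (Om Λ x)) :=
    LinearMap.pi (fun i => (Algebra.linearMap Λ (Om Λ x)).comp (LinearMap.proj i)) with hφ
  have hφs : Function.Surjective φ := by
    intro y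
    refine ⟨fun i => (hq (y i)).choose, funext fun i => ?_⟩
    simpa [hφ] using (hq (y i)).choose_spec
  have hφk : LinearMap.ker φ = x • (⊤ : Submodule Λ (Fin k → Λ)) := by
    ext y
    rw [LinearMap.mem_ker, mem_smul_top_iff]
    constructor
    · intro h
      have h1 : ∀ i, ∃ a, a * x = y i := by
        intro i
        have h2 : algebraMap Λ (Om Λ x) (y i) = 0 := congrFun h i
        exact Ideal.mem_span_singleton'.mp (Ideal.Quotient.eq_zero_iff_mem.mp h2)
      refine ⟨fun i => (h1 i).choose, funext fun i => ?_⟩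
      simpa [mul_comm] using (h1 i).choose_spec
    · rintro ⟨z, rfl⟩
      funext i
      simp only [hφ, LinearMap.pi_apply, LinearMap.comp_apply, LinearMap.proj_apply,
        Pi.smul_apply, smul_eq_mul, Algebra.linearMap_apply, Pi.zero_apply]
      rw [map_mul]
      have : algebraMap Λ (Om Λ x) x = 0 :=
        Ideal.Quotient.eq_zero_iff_mem.mpr (Ideal.mem_span_singleton_self x)
      rw [this, zero_mul]
  exact (Submodule.quotEquivOfEq _ _ hφk.symm).trans (φ.quotKerEquivOfSurjective hφs)

private lemma core [IsDomain (Λ ⧸ Ideal.span ({x} : Set Λ))] (hx0 : x ≠ 0)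
    {M : Type*} [AddCommGroup M] [Module Λ M] {k : ℕ}
    (g : (Fin k → Λ) →ₗ[Λ] M) (hg : Function.Surjective g)
    (hN : Module.finrank (FractionRing (Om Λ x)) ((FractionRing (Om Λ x)) ⊗[(Om Λ x)]
        (↥(LinearMap.ker g) ⧸ x • (⊤ : Submodule Λ ↥(LinearMap.ker g)))) =
      Module.finrank (FractionRing Λ) ((FractionRing Λ) ⊗[Λ] ↥(LinearMap.ker g))) :
    Module.finrank (FractionRing (Om Λ x)) ((FractionRing (Om Λ x)) ⊗[(Om Λ x)] (M ⧸ x • (⊤ : Submodule Λ M))) =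
      Module.finrank (FractionRing (Om Λ x)) ((FractionRing (Om Λ x)) ⊗[(Om Λ x)] (Submodule.torsionBy Λ M x)) +
        Module.finrank (FractionRing Λ) ((FractionRing Λ) ⊗[Λ] M) := by
  classical
  have hq : Function.Surjective (algebraMap Λ (Om Λ x)) := Ideal.Quotient.mk_surjective
  set N := LinearMap.ker g with hNdef
  -- finiteness
  haveI : Module.Finite Λ M := Module.Finite.of_surjective g hg
  haveI : Module.Finite Λ ↥N := Module.Finite.iff_fg.mpr (IsNoetherian.noetherian N)
  haveI : Module.Finite (Om Λ x) (↥N ⧸ x • (⊤ : Submodule Λ ↥N)) :=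
    Module.Finite.of_restrictScalars_finite Λ (Om Λ x) _
  haveI : Module.Finite (Om Λ x) ((Fin k → Λ) ⧸ x • (⊤ : Submodule Λ (Fin k → Λ))) :=
    Module.Finite.of_restrictScalars_finite Λ (Om Λ x) _
  haveI : Module.Finite (Om Λ x) (M ⧸ x • (⊤ : Submodule Λ M)) :=
    Module.Finite.of_restrictScalars_finite Λ (Om Λ x) _
  -- the maps
  have hπle : x • (⊤ : Submodule Λ (Fin k → Λ)) ≤ Submodule.comap g (x • (⊤ : Submodule Λ M)) := by
    intro y hy
    obtain ⟨z, rfl⟩ := (mem_smul_top_iff x y).mp hy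
    simp only [Submodule.mem_comap, map_smul]
    exact (mem_smul_top_iff x _).mpr ⟨g z, rfl⟩
  set πb : ((Fin k → Λ) ⧸ x • (⊤ : Submodule Λ (Fin k → Λ))) →ₗ[Λ] (M ⧸ x • (⊤ : Submodule Λ M)) :=
    Submodule.mapQ _ _ g hπle with hπb
  have hιle : x • (⊤ : Submodule Λ ↥N) ≤ Submodule.comap N.subtype (x • (⊤ : Submodule Λ (Fin k → Λ))) := by
    intro y hy
    obtain ⟨z, rfl⟩ := (mem_smul_top_iff x y).mp hy
    simp only [Submodule.mem_comap, Submodule.coe_subtype, Submodule.coe_smul]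
    exact (mem_smul_top_iff x _).mpr ⟨z, rfl⟩
  set ιb : (↥N ⧸ x • (⊤ : Submodule Λ ↥N)) →ₗ[Λ] ((Fin k → Λ) ⧸ x • (⊤ : Submodule Λ (Fin k → Λ))) :=
    Submodule.mapQ _ _ N.subtype hιle with hιb
  have hπsurj : Function.Surjective πb := by
    intro c
    obtain ⟨m, rfl⟩ := Submodule.Quotient.mk_surjective _ c
    obtain ⟨y, rfl⟩ := hg m
    exact ⟨Submodule.Quotient.mk y, Submodule.mapQ_apply _ _ _ _⟩
  -- exactness at (Fin k → Λ)/xF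
  have hexact2 : LinearMap.ker πb = LinearMap.range ιb := by
    ext b
    constructor
    · intro hb
      obtain ⟨y, rfl⟩ := Submodule.Quotient.mk_surjective _ b
      rw [LinearMap.mem_ker, hπb, Submodule.mapQ_apply, Submodule.Quotient.mk_eq_zero] at hb
      obtain ⟨m, hm⟩ := (mem_smul_top_iff x _).mp hb
      obtain ⟨z, hz⟩ := hg m
      have hw : y - x • z ∈ N := by
        rw [hNdef, LinearMap.mem_ker, map_sub, map_smul, hz, hm, sub_self]
      refine ⟨Submodule.Quotient.mk ⟨y - x • z, hw⟩, ?_⟩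
      rw [hιb, Submodule.mapQ_apply]
      rw [Submodule.Quotient.eq]
      simp only [Submodule.coe_subtype]
      refine (mem_smul_top_iff x _).mpr ⟨-z, ?_⟩
      simp [smul_neg]
    · rintro ⟨a, rfl⟩
      obtain ⟨w, rfl⟩ := Submodule.Quotient.mk_surjective _ a
      rw [LinearMap.mem_ker, hιb, Submodule.mapQ_apply, hπb, Submodule.mapQ_apply,
        Submodule.Quotient.mk_eq_zero]
      have : g (N.subtype w) = 0 := w.2
      rw [this]
      exact Submodule.zero_mem _
  -- the torsion piece
  set P := LinearMap.ker (g ∘ₗ (x • (LinearMap.id : (Fin k → Λ) →ₗ[Λ] (Fin k → Λ)))) with hP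
  set θ : ↥P →ₗ[Λ] M := g ∘ₗ P.subtype with hθ
  have hmemN : ∀ e : ↥P, x • (e : (Fin k → Λ)) ∈ N := by
    rintro ⟨e, he⟩
    rw [hP, LinearMap.mem_ker] at he
    simpa [hNdef, LinearMap.mem_ker] using he
  set inner : ↥P →ₗ[Λ] ↥N :=
    LinearMap.codRestrict N ((x • (LinearMap.id : (Fin k → Λ) →ₗ[Λ] (Fin k → Λ))) ∘ₗ P.subtype)
      (fun e => by simpa using hmemN e) with hinner
  set μ : ↥P →ₗ[Λ] (↥N ⧸ x • (⊤ : Submodule Λ ↥N)) :=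
    (x • (⊤ : Submodule Λ ↥N)).mkQ ∘ₗ inner with hμ
  have hinner_apply : ∀ e : ↥P, ((inner e : ↥N) : (Fin k → Λ)) = x • (e : (Fin k → Λ)) := fun e => rfl
  have hθrange : LinearMap.range θ = Submodule.torsionBy Λ M x := by
    ext m
    rw [LinearMap.mem_range, Submodule.mem_torsionBy_iff]
    constructor
    · rintro ⟨e, rfl⟩
      have he' : g (x • (e : (Fin k → Λ))) = 0 := e.2
      have h4 : x • θ e = g (x • (e : (Fin k → Λ))) := by
        simp [hθ, map_smul]
      rw [h4, he']
    · intro hm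
      obtain ⟨y, hy⟩ := hg m
      have hyP : y ∈ P := by
        have : g (x • y) = 0 := by rw [map_smul, hy, hm]
        simpa [hP, LinearMap.mem_ker] using this
      exact ⟨⟨y, hyP⟩, by simpa [hθ] using hy⟩
  have hkerθμ : LinearMap.ker θ = LinearMap.ker μ := by
    ext e
    simp only [LinearMap.mem_ker, hμ, LinearMap.comp_apply, Submodule.mkQ_apply,
      Submodule.Quotient.mk_eq_zero]
    constructor
    · intro he
      refine (mem_smul_top_iff x _).mpr ⟨⟨(e : (Fin k → Λ)), by rwa [hNdef, LinearMap.mem_ker]⟩, ?_⟩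
      apply Subtype.ext
      rw [hinner_apply]
      rfl
    · intro he
      obtain ⟨nn, hnn⟩ := (mem_smul_top_iff x _).mp he
      have h1 : x • ((nn : ↥N) : (Fin k → Λ)) = x • (e : (Fin k → Λ)) := by
        rw [← hinner_apply]
        exact_mod_cast congrArg (fun (v : ↥N) => (v : (Fin k → Λ))) hnn
      have h2 : ((nn : ↥N) : (Fin k → Λ)) = (e : (Fin k → Λ)) := by
        have := smul_pi_eq_zero Λ x hx0 (((nn : ↥N) : (Fin k → Λ)) - (e : (Fin k → Λ))) (by rw [smul_sub, h1, sub_self])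
        linear_combination (norm := module) this
      have h3 : (e : (Fin k → Λ)) ∈ N := h2 ▸ (nn : ↥N).2
      rw [hNdef, LinearMap.mem_ker] at h3
      simpa [hθ] using h3
  have hrangeμ : LinearMap.range μ = LinearMap.ker ιb := by
    ext b
    constructor
    · rintro ⟨e, rfl⟩
      rw [LinearMap.mem_ker, hμ, LinearMap.comp_apply, Submodule.mkQ_apply, hιb,
        Submodule.mapQ_apply, Submodule.Quotient.mk_eq_zero]
      refine (mem_smul_top_iff x _).mpr ⟨(e : (Fin k → Λ)), ?_⟩
      rw [← hinner_apply]
      rfl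
    · intro hb
      obtain ⟨nn, rfl⟩ := Submodule.Quotient.mk_surjective _ b
      rw [LinearMap.mem_ker, hιb, Submodule.mapQ_apply, Submodule.Quotient.mk_eq_zero] at hb
      obtain ⟨e, he⟩ := (mem_smul_top_iff x _).mp hb
      have heP : e ∈ P := by
        rw [hP, LinearMap.mem_ker]
        simp only [LinearMap.comp_apply, LinearMap.smul_apply, LinearMap.id_apply]
        rw [he]
        exact nn.2
      refine ⟨⟨e, heP⟩, ?_⟩
      rw [hμ, LinearMap.comp_apply, Submodule.mkQ_apply]
      congr 1
      apply Subtype.ext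
      rw [hinner_apply]
      exact he
  -- build uT : torsionBy → N/xN
  set eq1 : (↥P ⧸ LinearMap.ker θ) ≃ₗ[Λ] ↥(LinearMap.range θ) := θ.quotKerEquivRange with heq1
  set eq2 : ↥(Submodule.torsionBy Λ M x) ≃ₗ[Λ] (↥P ⧸ LinearMap.ker θ) :=
    ((eq1.trans (LinearEquiv.ofEq _ _ hθrange))).symm with heq2
  set lift : (↥P ⧸ LinearMap.ker θ) →ₗ[Λ] (↥N ⧸ x • (⊤ : Submodule Λ ↥N)) :=
    Submodule.liftQ (LinearMap.ker θ) μ (le_of_eq hkerθμ) with hlift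
  set uT : ↥(Submodule.torsionBy Λ M x) →ₗ[Λ] (↥N ⧸ x • (⊤ : Submodule Λ ↥N)) :=
    lift ∘ₗ eq2.toLinearMap with huT
  have hUinj : Function.Injective uT := by
    have h1 : Function.Injective lift := by
      rw [← LinearMap.ker_eq_bot, hlift]
      exact Submodule.ker_liftQ_eq_bot _ _ _ (le_of_eq hkerθμ.symm)
    exact h1.comp eq2.injective
  have hUrange : LinearMap.range uT = LinearMap.ker ιb := by
    rw [huT, LinearMap.range_comp, LinearEquiv.range, Submodule.map_top, hlift,
      Submodule.range_liftQ, hrangeμ]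
  -- now over (Om Λ x)
  have hexact1fun : Function.Exact ⇑uT ⇑ιb := LinearMap.exact_iff.mpr hUrange.symm
  have hexact2fun : Function.Exact ⇑ιb ⇑πb := LinearMap.exact_iff.mpr hexact2
  have hex1Ω : Function.Exact ⇑(uT.extendScalarsOfSurjective hq)
      ⇑(ιb.extendScalarsOfSurjective hq) := hexact1fun
  have hex2Ω : Function.Exact ⇑(ιb.extendScalarsOfSurjective hq)
      ⇑(πb.extendScalarsOfSurjective hq) := hexact2fun
  have keyΩ := rank_four_of_exact (R := (Om Λ x))
    (uT.extendScalarsOfSurjective hq) (ιb.extendScalarsOfSurjective hq)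
    (πb.extendScalarsOfSurjective hq) hUinj hπsurj hex1Ω hex2Ω
  have hfree : Module.finrank (FractionRing (Om Λ x)) ((FractionRing (Om Λ x)) ⊗[(Om Λ x)] ((Fin k → Λ) ⧸ x • (⊤ : Submodule Λ (Fin k → Λ)))) = k := by
    rw [tensor_finrank_eq_of_equiv (quotPiEquiv Λ x k), tensor_finrank_free]
  -- over Λ
  have hexK : Function.Exact ⇑N.subtype ⇑g :=
    LinearMap.exact_iff.mpr (Submodule.range_subtype N).symm
  have keyK := rank_add_of_exact (R := Λ) N.subtype g (Submodule.injective_subtype N) hg hexK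
  have hfreeK : Module.finrank (FractionRing Λ) ((FractionRing Λ) ⊗[Λ] (Fin k → Λ)) = k := tensor_finrank_free k
  omega

/-- Shift a finite free resolution. -/
private noncomputable def shiftRes {M : Type*} [AddCommGroup M] [Module Λ M] {d : ℕ} {n : ℕ → ℕ}
    (res : FiniteFreeResolution Λ M (d + 1) n) :
    FiniteFreeResolution Λ ↥(LinearMap.ker res.g) d (fun i => n (i + 1)) where
  bounded i hi := res.bounded (i + 1) (by omega)
  f i := res.f (i + 1)
  g := (res.f 0).codRestrict (LinearMap.ker res.g)
    (fun y => by rw [← res.exact_zero]; exact LinearMap.mem_range_self _ y)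
  surj := by
    rintro ⟨w, hw⟩
    rw [← res.exact_zero] at hw
    obtain ⟨z, hz⟩ := hw
    exact ⟨z, Subtype.ext hz⟩
  exact_zero := by rw [LinearMap.ker_codRestrict]; exact res.exact 0
  exact i := res.exact (i + 1)

private lemma case_zero [IsDomain (Λ ⧸ Ideal.span ({x} : Set Λ))] (hx0 : x ≠ 0)
    {M : Type*} [AddCommGroup M] [Module Λ M] {n : ℕ → ℕ}
    (res : FiniteFreeResolution Λ M 0 n) :
    Module.finrank (FractionRing (Om Λ x)) ((FractionRing (Om Λ x)) ⊗[(Om Λ x)] (M ⧸ x • (⊤ : Submodule Λ M))) =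
      Module.finrank (FractionRing (Om Λ x)) ((FractionRing (Om Λ x)) ⊗[(Om Λ x)] (Submodule.torsionBy Λ M x)) +
        Module.finrank (FractionRing Λ) ((FractionRing Λ) ⊗[Λ] M) := by
  haveI : Subsingleton (Fin (n 1) → Λ) :=
    ⟨fun f g => funext fun i => absurd i.2 (by have := res.bounded 1 Nat.one_pos; omega)⟩
  have hf0 : res.f 0 = 0 := Subsingleton.elim _ _
  have hker : LinearMap.ker res.g = ⊥ := by rw [← res.exact_zero, hf0, LinearMap.range_zero]
  haveI hsub : Subsingleton ↥(LinearMap.ker res.g) := by rw [hker]; infer_instance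
  haveI : Subsingleton (↥(LinearMap.ker res.g) ⧸
      x • (⊤ : Submodule Λ ↥(LinearMap.ker res.g))) :=
    (Submodule.Quotient.mk_surjective _).subsingleton
  exact core Λ x hx0 res.g res.surj
    ((tensor_finrank_subsingleton (R := (Om Λ x))).trans (tensor_finrank_subsingleton (R := Λ)).symm)

private lemma case_succ [IsDomain (Λ ⧸ Ideal.span ({x} : Set Λ))] (hx0 : x ≠ 0)
    {M : Type*} [AddCommGroup M] [Module Λ M] {d : ℕ} {n : ℕ → ℕ}
    (res : FiniteFreeResolution Λ M (d + 1) n)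
    (ih : Module.finrank (FractionRing (Om Λ x)) ((FractionRing (Om Λ x)) ⊗[(Om Λ x)] (↥(LinearMap.ker res.g) ⧸
          x • (⊤ : Submodule Λ ↥(LinearMap.ker res.g)))) =
        Module.finrank (FractionRing (Om Λ x)) ((FractionRing (Om Λ x)) ⊗[(Om Λ x)] (Submodule.torsionBy Λ ↥(LinearMap.ker res.g) x)) +
          Module.finrank (FractionRing Λ) ((FractionRing Λ) ⊗[Λ] ↥(LinearMap.ker res.g))) :
    Module.finrank (FractionRing (Om Λ x)) ((FractionRing (Om Λ x)) ⊗[(Om Λ x)] (M ⧸ x • (⊤ : Submodule Λ M))) =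
      Module.finrank (FractionRing (Om Λ x)) ((FractionRing (Om Λ x)) ⊗[(Om Λ x)] (Submodule.torsionBy Λ M x)) +
        Module.finrank (FractionRing Λ) ((FractionRing Λ) ⊗[Λ] M) := by
  set N := LinearMap.ker res.g with hNdef
  haveI : Subsingleton (Submodule.torsionBy Λ ↥N x) := by
    refine ⟨fun a b => ?_⟩
    have key : ∀ c : Submodule.torsionBy Λ ↥N x, c = 0 := by
      intro c
      have h1 : x • (c : ↥N) = 0 := c.2
      have h2 : x • ((c : ↥N) : Fin (n 0) → Λ) = 0 := congrArg Subtype.val h1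
      have h3 : ((c : ↥N) : Fin (n 0) → Λ) = 0 := smul_pi_eq_zero Λ x hx0 _ h2
      exact Subtype.ext (Subtype.ext h3)
    rw [key a, key b]
  rw [tensor_finrank_subsingleton (R := (Om Λ x))
    (A := ↥(Submodule.torsionBy Λ ↥N x)), zero_add] at ih
  exact core Λ x hx0 res.g res.surj ih

private lemma rank_eq_aux [IsDomain (Λ ⧸ Ideal.span ({x} : Set Λ))] (hx0 : x ≠ 0) (d : ℕ) :
    ∀ (n : ℕ → ℕ) (M : Type uu) [AddCommGroup M] [Module Λ M]
      (_ : FiniteFreeResolution Λ M d n),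
    Module.finrank (FractionRing (Om Λ x)) ((FractionRing (Om Λ x)) ⊗[(Om Λ x)] (M ⧸ x • (⊤ : Submodule Λ M))) =
      Module.finrank (FractionRing (Om Λ x)) ((FractionRing (Om Λ x)) ⊗[(Om Λ x)] (Submodule.torsionBy Λ M x)) +
        Module.finrank (FractionRing Λ) ((FractionRing Λ) ⊗[Λ] M) := by
  induction d with
  | zero => intro n M _ _ res; exact case_zero Λ x hx0 res
  | succ d ih =>
    intro n M _ _ res
    exact case_succ Λ x hx0 res (ih (fun i => n (i + 1)) ↥(LinearMap.ker res.g) (shiftRes Λ res))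

end Main

/-- Let `Λ` be a commutative Noetherian domain, `x ∈ Λ` a nonzero nonunit such that
`(Om Λ x) = Λ/xΛ` is again a domain, and let `M` be a finitely generated `Λ`-module admitting
a finite free resolution. Then `M/xM` and `M[x]` are finitely generated `(Om Λ x)`-modules and
`rank_Ω (M/xM) = rank_Ω (M[x]) + rank_Λ M`, the ranks being the dimensions of the
corresponding tensor products with the fraction fields. -/
theorem rank_mod_eq_rank_torsionBy_add_rank
    (Λ : Type*) [CommRing Λ] [IsDomain Λ] [IsNoetherianRing Λ]
    (x : Λ) (hx0 : x ≠ 0) (hxu : ¬IsUnit x)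
    [IsDomain (Λ ⧸ Ideal.span ({x} : Set Λ))]
    (M : Type*) [AddCommGroup M] [Module Λ M] [Module.Finite Λ M]
    (d : ℕ) (n : ℕ → ℕ) (res : FiniteFreeResolution Λ M d n) :
    Module.Finite (Λ ⧸ Ideal.span ({x} : Set Λ)) (M ⧸ x • (⊤ : Submodule Λ M)) ∧
    Module.Finite (Λ ⧸ Ideal.span ({x} : Set Λ)) (Submodule.torsionBy Λ M x) ∧
    Module.finrank (FractionRing (Λ ⧸ Ideal.span ({x} : Set Λ)))
        (FractionRing (Λ ⧸ Ideal.span ({x} : Set Λ))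
          ⊗[Λ ⧸ Ideal.span ({x} : Set Λ)] (M ⧸ x • (⊤ : Submodule Λ M))) =
      Module.finrank (FractionRing (Λ ⧸ Ideal.span ({x} : Set Λ)))
          (FractionRing (Λ ⧸ Ideal.span ({x} : Set Λ))
            ⊗[Λ ⧸ Ideal.span ({x} : Set Λ)] (Submodule.torsionBy Λ M x)) +
        Module.finrank (FractionRing Λ) (FractionRing Λ ⊗[Λ] M) := by
  refine ⟨Module.Finite.of_restrictScalars_finite Λ _ _,
    ?_, ?_⟩
  · haveI : Module.Finite Λ ↥(Submodule.torsionBy Λ M x) :=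
      Module.Finite.iff_fg.mpr (IsNoetherian.noetherian _)
    exact Module.Finite.of_restrictScalars_finite Λ _ _
  · cases d with
    | zero => exact case_zero Λ x hx0 res
    | succ d =>
      exact case_succ Λ x hx0 res
        (rank_eq_aux Λ x hx0 d (fun i => n (i + 1)) ↥(LinearMap.ker res.g) (shiftRes Λ res))
end

section
/- Let Λ be a commutative Noetherian domain and x ∈ Λ a nonzero nonunit such that the quotient ring Ω = Λ/xΛ is again a domain. Let M be a finitely generated Λ-module admitting a finite free resolution 0 → Λ^{n_d} → ⋯ → Λ^{n_0} → M → 0. Then M/xM is a torsion Ω-module if and only if M[x] is a torsion Ω-module and M is a torsion Λ-module. -/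
/-! Both sides say that `M_p = 0` for the prime `p = xΛ`. Over the domain `Λ/p`, a module
killed by `p` is torsion exactly when its localization at `p` vanishes. For `M/xM` this is
equivalent to `M_p = 0` by Nakayama, since `Supp(M/xM) = Supp(M) ∩ V(x)`.
Conversely, if `M` is torsion, each `m` is killed by some `x^k μ` with `x ∤ μ` (Λ is
Noetherian), and peeling off the factors `x` one at a time, with `M[x]_p = 0`, yields an
element outside `p` killing `m`. -/

open Pointwise

namespace Module

variable {R M : Type*} [CommRing R] [AddCommGroup M] [Module R M]

theorem isTorsion_quotient_iff_notMem_support (I : Ideal R) [I.IsPrime]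
    [Module (R ⧸ I) M] [IsScalarTower R (R ⧸ I) M] :
    IsTorsion (R ⧸ I) M ↔ (⟨I, ‹_›⟩ : PrimeSpectrum R) ∉ support R M := by
  rw [notMem_support_iff']
  refine forall_congr' fun m ↦ ⟨fun ⟨a, ha⟩ ↦ ?_, fun ⟨r, hr, hrm⟩ ↦ ?_⟩
  · obtain ⟨r, hr⟩ := Ideal.Quotient.mk_surjective (a : R ⧸ I)
    refine ⟨r, ?_, ?_⟩
    · rw [← Ideal.Quotient.eq_zero_iff_mem, hr]
      exact nonZeroDivisors.ne_zero a.2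
    · rw [← algebraMap_smul (R ⧸ I), Ideal.Quotient.algebraMap_eq, hr]
      exact ha
  · have hr0 : Ideal.Quotient.mk I r ≠ 0 := by rwa [Ne, Ideal.Quotient.eq_zero_iff_mem]
    refine ⟨⟨_, mem_nonZeroDivisors_of_ne_zero hr0⟩, ?_⟩
    change algebraMap R (R ⧸ I) r • m = 0
    rwa [algebraMap_smul]

theorem isTorsion_of_notMem_support [IsDomain R] {p : PrimeSpectrum R}
    (h : p ∉ support R M) : IsTorsion R M := fun m ↦ by
  obtain ⟨r, hr, hrm⟩ := notMem_support_iff'.1 h m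
  have hr0 : r ≠ 0 := fun h0 ↦ hr (h0 ▸ p.asIdeal.zero_mem)
  exact ⟨⟨r, mem_nonZeroDivisors_of_ne_zero hr0⟩, hrm⟩

theorem notMem_support_quotSMulTop_iff [Module.Finite R M] {p : PrimeSpectrum R} {x : R}
    (hx : x ∈ p.asIdeal) : p ∉ support R (QuotSMulTop x M) ↔ p ∉ support R M := by
  simp [support_quotSMulTop, PrimeSpectrum.mem_zeroLocus, hx]

theorem exists_notMem_smul_eq_zero_of_pow_smul_eq_zero {p : PrimeSpectrum R} {x : R}
    (h : p ∉ support R (Submodule.torsionBy R M x)) {k : ℕ} {m : M} (hm : x ^ k • m = 0) :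
    ∃ r ∉ p.asIdeal, r • m = 0 := by
  induction k generalizing m with
  | zero => exact ⟨1, (Ideal.ne_top_iff_one _).1 p.isPrime.ne_top, by simpa using hm⟩
  | succ k ih =>
    obtain ⟨r, hr, hrm⟩ := ih (m := x • m) (by rwa [smul_smul, ← pow_succ])
    have hrm' : r • m ∈ Submodule.torsionBy R M x := by
      rwa [Submodule.mem_torsionBy_iff, smul_comm]
    obtain ⟨s, hs, hsm⟩ := notMem_support_iff'.1 h ⟨r • m, hrm'⟩
    refine ⟨s * r, p.isPrime.mul_notMem hs hr, ?_⟩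
    rw [mul_smul]
    exact congrArg Subtype.val hsm

theorem notMem_support_of_isTorsion_of_notMem_support_torsionBy [IsDomain R] [WfDvdMonoid R]
    {p : PrimeSpectrum R} {x : R} (hx : ¬IsUnit x) (hp : p.asIdeal = Ideal.span {x})
    (hM : IsTorsion R M) (h : p ∉ support R (Submodule.torsionBy R M x)) : p ∉ support R M := by
  rw [notMem_support_iff']
  intro m
  obtain ⟨a, ha⟩ := @hM m
  obtain ⟨k, μ, hμ, hfac⟩ := WfDvdMonoid.max_power_factor' (nonZeroDivisors.ne_zero a.2) hx
  have hμm : x ^ k • μ • m = 0 := by rw [smul_smul, ← hfac]; exact ha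
  obtain ⟨r, hr, hrm⟩ := exists_notMem_smul_eq_zero_of_pow_smul_eq_zero h hμm
  have hμp : μ ∉ p.asIdeal := by rwa [hp, Ideal.mem_span_singleton]
  exact ⟨r * μ, p.isPrime.mul_notMem hr hμp, by rwa [mul_smul]⟩

end Module

theorem mod_isTorsion_iff_torsionBy_isTorsion_and_isTorsion_general
    (Λ : Type*) [CommRing Λ] [IsDomain Λ] [IsNoetherianRing Λ]
    (x : Λ) (hxu : ¬IsUnit x)
    [IsDomain (Λ ⧸ Ideal.span ({x} : Set Λ))]
    (M : Type*) [AddCommGroup M] [Module Λ M] [Module.Finite Λ M] :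
    Module.IsTorsion (Λ ⧸ Ideal.span ({x} : Set Λ)) (M ⧸ x • (⊤ : Submodule Λ M)) ↔
      Module.IsTorsion (Λ ⧸ Ideal.span ({x} : Set Λ)) (Submodule.torsionBy Λ M x) ∧
        Module.IsTorsion Λ M := by
  have : (Ideal.span {x}).IsPrime := (Ideal.Quotient.isDomain_iff_prime _).1 ‹_›
  have hx : x ∈ Ideal.span {x} := Ideal.mem_span_singleton_self x
  rw [Module.isTorsion_quotient_iff_notMem_support, Module.isTorsion_quotient_iff_notMem_support,
    Module.notMem_support_quotSMulTop_iff hx]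
  refine ⟨fun hM ↦ ⟨fun hMx ↦ hM ?_, Module.isTorsion_of_notMem_support hM⟩,
    fun ⟨hMx, hM⟩ ↦
      Module.notMem_support_of_isTorsion_of_notMem_support_torsionBy hxu rfl hM hMx⟩
  exact Module.support_subset_of_injective _ (Submodule.injective_subtype _) hMx

/-- Let `Λ` be a commutative Noetherian domain, `x ∈ Λ` a nonzero nonunit such that
`Ω = Λ/xΛ` is again a domain, and let `M` be a finitely generated `Λ`-module admitting a
finite free resolution. Then `M/xM` is a torsion `Ω`-module if and only if `M[x]` is a
torsion `Ω`-module and `M` is a torsion `Λ`-module. -/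
theorem mod_isTorsion_iff_torsionBy_isTorsion_and_isTorsion
    (Λ : Type*) [CommRing Λ] [IsDomain Λ] [IsNoetherianRing Λ]
    (x : Λ) (hx0 : x ≠ 0) (hxu : ¬IsUnit x)
    [IsDomain (Λ ⧸ Ideal.span ({x} : Set Λ))]
    (M : Type*) [AddCommGroup M] [Module Λ M] [Module.Finite Λ M]
    (d : ℕ) (n : ℕ → ℕ) (res : FiniteFreeResolution Λ M d n) :
    Module.IsTorsion (Λ ⧸ Ideal.span ({x} : Set Λ)) (M ⧸ x • (⊤ : Submodule Λ M)) ↔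
      Module.IsTorsion (Λ ⧸ Ideal.span ({x} : Set Λ)) (Submodule.torsionBy Λ M x) ∧
        Module.IsTorsion Λ M :=
  mod_isTorsion_iff_torsionBy_isTorsion_and_isTorsion_general Λ x hxu M
end
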